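/- arXiv:2111.12437 — 5 statements merged into one kernel-verified Lean document; each statement's English description precedes it below -/
import Mathlib

section
/- Let ι be a nonempty finite index set, let α : ι → ℝ be nonnegative, and let M > 0 be real. For every allocation f : ι → ℝ with f k > 0 for all k and ∑_k f k = M, one has ∑_k α k / sqrt(f k) ≥ (∑_k (α k)^{2/3})^{3/2} / sqrt(M). Moreover, if α k > 0 for all k, equality is attained at the allocation f k = M · (α k)^{2/3} / ∑_{k'} (α k')^{2/3}. -/
/-!
The error `∑ a k / √(f k)` is the case `r = 3/2` of the cost `∑ a k / f k ^ (r - 1)`. Writing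
`a k ^ r⁻¹ = (a k / f k ^ (r - 1)) ^ r⁻¹ * f k ^ (1 - r⁻¹)`, Hölder's inequality with exponents
`r` and `r / (r - 1)` bounds `(∑ a k ^ r⁻¹) ^ r` by the cost times `M ^ (r - 1)`. Hölder is tight
when `a k / f k ^ (r - 1)` is proportional to `f k`, i.e. for `f k ∝ a k ^ r⁻¹`.
-/

open Finset Real

section

variable {ι : Type*} [Fintype ι]

theorem sum_rpow_inv_le_sum_div_rpow_rpow_mul {r : ℝ} (hr : 1 < r) {a f : ι → ℝ}
    (ha : ∀ k, 0 ≤ a k) (hf : ∀ k, 0 < f k) :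
    ∑ k, a k ^ r⁻¹ ≤ (∑ k, a k / f k ^ (r - 1)) ^ r⁻¹ * (∑ k, f k) ^ (1 - r⁻¹) := by
  have hr₀ : r ≠ 0 := by positivity
  have hq := HolderConjugate.conjExponent hr
  have hcost : ∀ k, 0 ≤ a k / f k ^ (r - 1) := fun k =>
    div_nonneg (ha k) (rpow_nonneg (hf k).le _)
  have hsplit : ∀ k, a k ^ r⁻¹ = (a k / f k ^ (r - 1)) ^ r⁻¹ * f k ^ (1 - r⁻¹) := by
    intro k
    rw [div_rpow (ha k) (rpow_nonneg (hf k).le _), ← rpow_mul (hf k).le, sub_mul, one_mul,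
      mul_inv_cancel₀ hr₀, div_mul_cancel₀ _ (rpow_pos_of_pos (hf k) _).ne']
  rw [hq.one_sub_inv] at hsplit ⊢
  calc ∑ k, a k ^ r⁻¹
      = ∑ k, (a k / f k ^ (r - 1)) ^ r⁻¹ * f k ^ r.conjExponent⁻¹ :=
        sum_congr rfl fun k _ => hsplit k
    _ ≤ (∑ k, ((a k / f k ^ (r - 1)) ^ r⁻¹) ^ r) ^ (1 / r)
          * (∑ k, (f k ^ r.conjExponent⁻¹) ^ r.conjExponent) ^ (1 / r.conjExponent) :=
        inner_le_Lp_mul_Lq_of_nonneg _ hq (fun k _ => rpow_nonneg (hcost k) _)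
          (fun k _ => rpow_nonneg (hf k).le _)
    _ = (∑ k, a k / f k ^ (r - 1)) ^ r⁻¹ * (∑ k, f k) ^ r.conjExponent⁻¹ := by
        simp only [rpow_inv_rpow (hcost _) hr₀, rpow_inv_rpow (hf _).le hq.symm.ne_zero, one_div]

theorem rpow_sum_rpow_inv_le_sum_div_rpow_mul {r : ℝ} (hr : 1 < r) {a f : ι → ℝ}
    (ha : ∀ k, 0 ≤ a k) (hf : ∀ k, 0 < f k) :
    (∑ k, a k ^ r⁻¹) ^ r ≤ (∑ k, a k / f k ^ (r - 1)) * (∑ k, f k) ^ (r - 1) := by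
  have hr₀ : 0 < r := by linarith
  have hcost : 0 ≤ ∑ k, a k / f k ^ (r - 1) :=
    sum_nonneg fun k _ => div_nonneg (ha k) (rpow_nonneg (hf k).le _)
  have hbudget : 0 ≤ ∑ k, f k := sum_nonneg fun k _ => (hf k).le
  calc (∑ k, a k ^ r⁻¹) ^ r
      ≤ ((∑ k, a k / f k ^ (r - 1)) ^ r⁻¹ * (∑ k, f k) ^ (1 - r⁻¹)) ^ r := by
        gcongr
        · exact sum_nonneg fun k _ => rpow_nonneg (ha k) _
        · exact sum_rpow_inv_le_sum_div_rpow_rpow_mul hr ha hf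
    _ = (∑ k, a k / f k ^ (r - 1)) * (∑ k, f k) ^ (r - 1) := by
        rw [mul_rpow (rpow_nonneg hcost _) (rpow_nonneg hbudget _), rpow_inv_rpow hcost hr₀.ne',
          ← rpow_mul hbudget, sub_mul, one_mul, inv_mul_cancel₀ hr₀.ne']

theorem div_rpow_optimal_allocation {r M S x : ℝ} (hr : r ≠ 0) (hM : 0 < M) (hS : 0 < S)
    (hx : 0 < x) :
    x / (M * x ^ r⁻¹ / S) ^ (r - 1) = x ^ r⁻¹ * (S ^ (r - 1) / M ^ (r - 1)) := by
  have hxr := rpow_pos_of_pos hx r⁻¹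
  rw [div_rpow (by positivity) hS.le, mul_rpow hM.le hxr.le, ← rpow_mul hx.le]
  have hsplit : x = x ^ r⁻¹ * x ^ ((r - 1) * r⁻¹) := by
    rw [← rpow_add hx, sub_mul, one_mul, mul_inv_cancel₀ hr, add_sub_cancel, rpow_one]
  nth_rewrite 1 [hsplit]
  field_simp [(rpow_pos_of_pos hx ((r - 1) * r⁻¹)).ne']

theorem sum_div_rpow_optimal_allocation {r M : ℝ} (hr : r ≠ 0) (hM : 0 < M) {a : ι → ℝ}
    (ha : ∀ k, 0 ≤ a k) (hS : 0 < ∑ k, a k ^ r⁻¹) :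
    ∑ k, a k / (M * a k ^ r⁻¹ / ∑ k', a k' ^ r⁻¹) ^ (r - 1)
      = (∑ k, a k ^ r⁻¹) ^ r / M ^ (r - 1) := by
  set S := ∑ k, a k ^ r⁻¹
  have hterm : ∀ k, a k / (M * a k ^ r⁻¹ / S) ^ (r - 1)
      = a k ^ r⁻¹ * (S ^ (r - 1) / M ^ (r - 1)) := by
    intro k
    rcases (ha k).eq_or_lt with hk | hk
    · simp [← hk, zero_rpow (inv_ne_zero hr)]
    · exact div_rpow_optimal_allocation hr hM hS hk
  rw [sum_congr rfl fun k _ => hterm k, ← sum_mul, mul_div_assoc',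
    ← rpow_one_add' hS.le (by rwa [add_sub_cancel]), add_sub_cancel]

end

/-- Optimal shot allocation for the 1-norm: for nonnegative `α` and total budget
`M > 0`, any positive allocation `f` with `∑ f = M` satisfies
`∑ k, α k / sqrt (f k) ≥ (∑ k, (α k)^(2/3))^(3/2) / sqrt M`, with equality (for
strictly positive `α`) at `f k = M * (α k)^(2/3) / ∑ (α k')^(2/3)`. -/
theorem stmt2 {ι : Type*} [Fintype ι] [Nonempty ι]
    (α : ι → ℝ) (hα : ∀ k, 0 ≤ α k) (M : ℝ) (hM : 0 < M) :
    (∀ f : ι → ℝ, (∀ k, 0 < f k) → (∑ k, f k) = M →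
      (∑ k, (α k) ^ ((2 : ℝ) / 3)) ^ ((3 : ℝ) / 2) / Real.sqrt M
        ≤ ∑ k, α k / Real.sqrt (f k)) ∧
    ((∀ k, 0 < α k) →
      (∑ k, M * (α k) ^ ((2 : ℝ) / 3) / (∑ k', (α k') ^ ((2 : ℝ) / 3))) = M ∧
      (∑ k, α k / Real.sqrt (M * (α k) ^ ((2 : ℝ) / 3) / (∑ k', (α k') ^ ((2 : ℝ) / 3))))
        = (∑ k, (α k) ^ ((2 : ℝ) / 3)) ^ ((3 : ℝ) / 2) / Real.sqrt M) := by
  have hr : (1 : ℝ) < 3 / 2 := by norm_num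
  have hinv : (2 : ℝ) / 3 = (3 / 2)⁻¹ := by norm_num
  have hsqrt : ∀ x : ℝ, √x = x ^ ((3 : ℝ) / 2 - 1) := fun x => by
    rw [sqrt_eq_rpow]; norm_num
  simp only [hinv, hsqrt]
  constructor
  · intro f hf hbudget
    rw [div_le_iff₀ (by positivity), ← hbudget]
    exact rpow_sum_rpow_inv_le_sum_div_rpow_mul hr hα hf
  · intro hα_pos
    have hS : 0 < ∑ k, α k ^ ((3 : ℝ) / 2)⁻¹ :=
      sum_pos (fun k _ => rpow_pos_of_pos (hα_pos k) _) univ_nonempty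
    refine ⟨?_, sum_div_rpow_optimal_allocation (by norm_num) hM hα hS⟩
    rw [← sum_div, ← mul_sum, mul_div_cancel_right₀ _ hS.ne']
end

section
/- Let ι be a nonempty finite index set, let b : ι → ℝ be positive, and let ε > 0. For every T : ι → ℝ with T l > 0 for all l satisfying the error constraint ∑_l (b l)² / (T l)² ≤ ε², one has ∑_l T l ≥ ε⁻¹ (∑_l (b l)^{2/3})^{3/2}. Moreover, the choice T l = ε⁻¹ (b l)^{2/3} (∑_{l'} (b l')^{2/3})^{1/2} satisfies the constraint with equality and attains ∑_l T l = ε⁻¹ (∑_l (b l)^{2/3})^{3/2}. -/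
/-!
The lower bound is Radon's inequality `(∑ c)³ ≤ (∑ T)² ∑ c³/T²` applied to `c = b^(2/3)`, for
which `c³ = b²`. Radon's inequality follows by summing the tangent-line bound
`c³/T² ≥ 3μ²c - 2μ³T`, equivalent to `(c - μT)²(c + 2μT) ≥ 0`, at the Lagrange multiplier
`μ = ∑ c / ∑ T`. Equality holds when `T` is proportional to `c`, which gives the optimal choice.
-/

open Finset

theorem tangent_le_pow_three_div_sq {c t μ : ℝ} (hc : 0 ≤ c) (ht : 0 < t) (hμ : 0 ≤ μ) :
    3 * μ ^ 2 * c - 2 * μ ^ 3 * t ≤ c ^ 3 / t ^ 2 := by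
  rw [le_div_iff₀ (by positivity)]
  nlinarith [mul_nonneg (sq_nonneg (c - μ * t)) (by positivity : 0 ≤ c + 2 * μ * t)]

theorem Finset.pow_three_sum_le_sq_sum_mul_sum_pow_three_div_sq {ι : Type*} (s : Finset ι)
    {c t : ι → ℝ} (hc : ∀ i ∈ s, 0 ≤ c i) (ht : ∀ i ∈ s, 0 < t i) :
    (∑ i ∈ s, c i) ^ 3 ≤ (∑ i ∈ s, t i) ^ 2 * ∑ i ∈ s, c i ^ 3 / t i ^ 2 := by
  rcases s.eq_empty_or_nonempty with rfl | hs
  · simp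
  set C := ∑ i ∈ s, c i
  set τ := ∑ i ∈ s, t i
  have hτ : 0 < τ := sum_pos ht hs
  have hμ : 0 ≤ C / τ := div_nonneg (sum_nonneg hc) hτ.le
  rw [← div_le_iff₀' (by positivity)]
  calc C ^ 3 / τ ^ 2 = 3 * (C / τ) ^ 2 * C - 2 * (C / τ) ^ 3 * τ := by
        field_simp
        ring
    _ = ∑ i ∈ s, (3 * (C / τ) ^ 2 * c i - 2 * (C / τ) ^ 3 * t i) := by
        rw [sum_sub_distrib, ← mul_sum, ← mul_sum]
    _ ≤ ∑ i ∈ s, c i ^ 3 / t i ^ 2 :=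
        sum_le_sum fun i hi => tangent_le_pow_three_div_sq (hc i hi) (ht i hi) hμ

theorem Finset.rpow_three_halves_sum_le_mul_sum {ι : Type*} (s : Finset ι) {c t : ι → ℝ}
    {ε : ℝ} (hc : ∀ i ∈ s, 0 ≤ c i) (ht : ∀ i ∈ s, 0 < t i) (hε : 0 ≤ ε)
    (h : ∑ i ∈ s, c i ^ 3 / t i ^ 2 ≤ ε ^ 2) :
    (∑ i ∈ s, c i) ^ ((3 : ℝ) / 2) ≤ ε * ∑ i ∈ s, t i := by
  have hC : 0 ≤ ∑ i ∈ s, c i := sum_nonneg hc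
  have hτ : 0 ≤ ∑ i ∈ s, t i := sum_nonneg fun i hi => (ht i hi).le
  rw [← pow_le_pow_iff_left₀ (by positivity) (by positivity) two_ne_zero,
    ← Real.rpow_mul_natCast hC, show (3 : ℝ) / 2 * (2 : ℕ) = (3 : ℕ) by norm_num,
    Real.rpow_natCast]
  calc (∑ i ∈ s, c i) ^ 3 ≤ (∑ i ∈ s, t i) ^ 2 * ∑ i ∈ s, c i ^ 3 / t i ^ 2 :=
        s.pow_three_sum_le_sq_sum_mul_sum_pow_three_div_sq hc ht
    _ ≤ (∑ i ∈ s, t i) ^ 2 * ε ^ 2 := by gcongr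
    _ = (ε * ∑ i ∈ s, t i) ^ 2 := by ring

theorem pow_three_div_mul_self_sq (κ c : ℝ) : c ^ 3 / (κ * c) ^ 2 = c / κ ^ 2 := by
  rcases eq_or_ne c 0 with rfl | hc
  · simp
  rcases eq_or_ne κ 0 with rfl | hκ
  · simp
  field_simp

/-- Optimal phase-estimation resource allocation: for positive `b` and error
budget `ε > 0`, any positive `T` with `∑ l, (b l)²/(T l)² ≤ ε²` satisfies
`∑ T ≥ ε⁻¹ (∑ (b l)^(2/3))^(3/2)`, and the explicit choice
`T l = ε⁻¹ (b l)^(2/3) (∑ (b l')^(2/3))^(1/2)` meets the constraint with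
equality and attains this total. -/
theorem stmt4 {ι : Type*} [Fintype ι] [Nonempty ι]
    (b : ι → ℝ) (hb : ∀ l, 0 < b l) (ε : ℝ) (hε : 0 < ε) :
    (∀ T : ι → ℝ, (∀ l, 0 < T l) → (∑ l, (b l) ^ 2 / (T l) ^ 2) ≤ ε ^ 2 →
      ε⁻¹ * (∑ l, (b l) ^ ((2 : ℝ) / 3)) ^ ((3 : ℝ) / 2) ≤ ∑ l, T l) ∧
    ((∑ l, (b l) ^ 2 /
        (ε⁻¹ * (b l) ^ ((2 : ℝ) / 3) * (∑ l', (b l') ^ ((2 : ℝ) / 3)) ^ ((1 : ℝ) / 2)) ^ 2)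
      = ε ^ 2 ∧
     (∑ l, ε⁻¹ * (b l) ^ ((2 : ℝ) / 3) * (∑ l', (b l') ^ ((2 : ℝ) / 3)) ^ ((1 : ℝ) / 2))
      = ε⁻¹ * (∑ l, (b l) ^ ((2 : ℝ) / 3)) ^ ((3 : ℝ) / 2)) := by
  set S := ∑ l, b l ^ ((2 : ℝ) / 3) with hS_def
  have hcube : ∀ l, b l ^ 2 = (b l ^ ((2 : ℝ) / 3)) ^ 3 := fun l => by
    rw [← Real.rpow_mul_natCast (hb l).le]
    norm_num
  have hS : 0 < S := sum_pos (fun l _ => Real.rpow_pos_of_pos (hb l) _) univ_nonempty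
  have hsqrt : (S ^ ((1 : ℝ) / 2)) ^ 2 = S := by
    rw [← Real.rpow_mul_natCast hS.le]
    norm_num
  refine ⟨fun T hT hsum => ?_, ?_, ?_⟩
  · rw [inv_mul_le_iff₀ hε]
    refine univ.rpow_three_halves_sum_le_mul_sum (fun l _ => (Real.rpow_pos_of_pos (hb l) _).le)
      (fun l _ => hT l) hε.le ?_
    simpa only [hcube] using hsum
  · rw [sum_congr rfl fun l _ => by rw [hcube, mul_right_comm, pow_three_div_mul_self_sq],
      ← sum_div, ← hS_def, mul_pow, hsqrt]
    field_simp
  · rw [← sum_mul, ← mul_sum, mul_assoc, ← Real.rpow_one_add' hS.le (by norm_num)]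
    norm_num
end

section
/- Let n be a finite type, let H : ℝ → Matrix n n ℂ, ψ : ℝ → (n → ℂ), and E : ℝ → ℝ, and fix t₀ ∈ ℝ. Assume: (i) every entry t ↦ (H t) i j has derivative (H') i j at t₀ for some matrix H' : Matrix n n ℂ; (ii) every component t ↦ ψ t i has derivative (ψ') i at t₀ for some ψ' : n → ℂ; (iii) E has derivative E'(t₀) at t₀; (iv) for all t, H t is Hermitian, ∑_i |ψ t i|² = 1, and (H t) *ᵥ (ψ t) = (E t : ℂ) • (ψ t). Then E'(t₀) = Re(∑_{i,j} conj(ψ t₀ i) · (H' i j) · (ψ t₀ j)), i.e., the derivative of the eigenvalue equals the expectation value of the derivative of the Hamiltonian in the corresponding normalized eigenvector (the Hellmann–Feynman theorem). -/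
/-!
Differentiating the eigenvalue equation `H ψ = E ψ` at `t₀` gives `H' ψ + H ψ' = E' ψ + E ψ'`.
Pair both sides with `ψ`: since `H` is Hermitian and `E` is real, `⟨ψ, H ψ'⟩ = ⟨H ψ, ψ'⟩ = E ⟨ψ, ψ'⟩`
cancels against the last term, and `⟨ψ, ψ⟩ = 1` leaves `⟨ψ, H' ψ⟩ = E'`.
-/

open Finset Matrix

section

variable {m n : Type*} [Fintype n]

theorem hasDerivAt_mulVec {𝕜 𝔸 : Type*} [NontriviallyNormedField 𝕜] [NormedRing 𝔸]
    [NormedAlgebra 𝕜 𝔸] {M : 𝕜 → Matrix m n 𝔸} {M' : Matrix m n 𝔸} {v : 𝕜 → n → 𝔸}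
    {v' : n → 𝔸} {x : 𝕜} (hM : ∀ i j, HasDerivAt (fun t => M t i j) (M' i j) x)
    (hv : HasDerivAt v v' x) :
    HasDerivAt (fun t => M t *ᵥ v t) (M' *ᵥ v x + M x *ᵥ v') x :=
  hasDerivAt_pi.2 fun i => by
    simpa [mulVec, dotProduct, sum_add_distrib] using
      HasDerivAt.fun_sum fun j _ => (hM i j).mul (hasDerivAt_pi.1 hv j)

theorem sum_sum_starRingEnd_mul_mul {α : Type*} [CommSemiring α] [StarRing α] [Fintype m]
    (u : m → α) (M : Matrix m n α) (v : n → α) :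
    ∑ i, ∑ j, starRingEnd α (u i) * M i j * v j = star u ⬝ᵥ (M *ᵥ v) := by
  simp [dotProduct, mulVec, mul_sum, mul_assoc, starRingEnd_apply]

theorem Matrix.IsHermitian.star_dotProduct_mulVec_eq_mul {α : Type*} [CommSemiring α]
    [StarRing α] {M : Matrix n n α} (hM : M.IsHermitian) {u : n → α} {r : α}
    (hr : IsSelfAdjoint r) (hu : M *ᵥ u = r • u) (v : n → α) :
    star u ⬝ᵥ (M *ᵥ v) = r * (star u ⬝ᵥ v) := by
  rw [dotProduct_mulVec, ← hM.eq, ← star_mulVec, hu, star_smul, hr.star_eq, smul_dotProduct,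
    smul_eq_mul]

theorem star_dotProduct_self_eq_sum_norm_sq {𝕜 : Type*} [RCLike 𝕜] (v : n → 𝕜) :
    star v ⬝ᵥ v = ((∑ i, ‖v i‖ ^ 2 : ℝ) : 𝕜) := by
  simp [dotProduct, RCLike.conj_mul]

end

/-- Hellmann–Feynman theorem (finite dimensions): if `ψ t` is a normalized
eigenvector of the Hermitian family `H t` with eigenvalue `E t`, and all data
are differentiable at `t₀`, then `E' t₀` equals the expectation value of the
derivative of the Hamiltonian, `Re ⟨ψ t₀, H' ψ t₀⟩`. -/
theorem stmt7 {n : Type*} [Fintype n]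
    (H : ℝ → Matrix n n ℂ) (ψ : ℝ → n → ℂ) (E : ℝ → ℝ) (t₀ : ℝ)
    (H' : Matrix n n ℂ) (ψ' : n → ℂ) (E' : ℝ)
    (hH : ∀ i j, HasDerivAt (fun t => H t i j) (H' i j) t₀)
    (hψ : ∀ i, HasDerivAt (fun t => ψ t i) (ψ' i) t₀)
    (hE : HasDerivAt E E' t₀)
    (herm : ∀ t, (H t).IsHermitian)
    (hnorm : ∀ t, (∑ i, ‖ψ t i‖ ^ 2) = 1)
    (heig : ∀ t, (H t) *ᵥ (ψ t) = (E t : ℂ) • (ψ t)) :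
    E' = (∑ i, ∑ j, (starRingEnd ℂ) (ψ t₀ i) * H' i j * ψ t₀ j).re := by
  have hψ₀ : HasDerivAt ψ ψ' t₀ := hasDerivAt_pi.2 hψ
  have hderiv : H' *ᵥ ψ t₀ + H t₀ *ᵥ ψ' = (E t₀ : ℂ) • ψ' + (E' : ℂ) • ψ t₀ := by
    have hrhs := hE.ofReal_comp.fun_smul hψ₀
    rw [← funext heig] at hrhs
    exact (hasDerivAt_mulVec hH hψ₀).unique hrhs
  have hpaired := congrArg (star (ψ t₀) ⬝ᵥ ·) hderiv
  simp only [dotProduct_add, dotProduct_smul, smul_eq_mul,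
    (herm t₀).star_dotProduct_mulVec_eq_mul (Complex.conj_ofReal _) (heig t₀),
    star_dotProduct_self_eq_sum_norm_sq, hnorm t₀, RCLike.ofReal_one, mul_one] at hpaired
  rw [add_comm, add_right_inj] at hpaired
  rw [sum_sum_starRingEnd_mul_mul, hpaired, Complex.ofReal_re]
end

section
/- Let ι and n be finite types, let h : ι → ℝ be nonnegative with λ := ∑_i h i > 0, and let P : ι → Matrix n n ℂ be such that each P i is unitary. Define the SELECT matrix S : Matrix (ι × n) (ι × n) ℂ by S (i,a) (j,b) = (if i = j then (P i) a b else 0), the prepared ancilla state v : ι → ℂ by v i = sqrt(h i / λ), and for w : ι → ℂ, φ : n → ℂ write (w ⊗ φ)(i,a) = w i · φ a. Then for all ψ₁, ψ₂ : n → ℂ: ⟨v ⊗ ψ₁, S *ᵥ (v ⊗ ψ₂)⟩ = (1/λ) · ⟨ψ₁, O *ᵥ ψ₂⟩, where O = ∑_i (h i : ℂ) • (P i) and ⟨x,y⟩ = ∑_k conj(x k) · y k. -/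
open Finset Matrix

/-! Conjugating SELECT by the tensor states `v ⊗ ψ` picks out the diagonal blocks, weighted by
`conj (v i) * v i`, and PREPARE is built so that this weight is `h i / λ`. -/

section Select

variable {ι n R : Type*} [Fintype ι] [Fintype n] [DecidableEq ι] [CommSemiring R]
  {S : Matrix (ι × n) (ι × n) R} {P : ι → Matrix n n R}

theorem mulVec_tensor_of_blockDiagonal
    (hS : ∀ i a j b, S (i, a) (j, b) = if i = j then P i a b else 0)
    (v : ι → R) (ψ : n → R) (i : ι) (a : n) :
    (S *ᵥ fun p : ι × n => v p.1 * ψ p.2) (i, a) = v i * (P i *ᵥ ψ) a := by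
  simp only [mulVec, dotProduct, Fintype.sum_prod_type, hS, ite_mul, zero_mul]
  rw [Finset.sum_eq_single i (fun j _ hj => by simp [Ne.symm hj]) (by simp)]
  simp only [if_true, Finset.mul_sum]
  exact Finset.sum_congr rfl fun b _ => by ring

theorem tensor_dotProduct_mulVec_tensor_of_blockDiagonal
    (hS : ∀ i a j b, S (i, a) (j, b) = if i = j then P i a b else 0)
    (w v : ι → R) (φ ψ : n → R) :
    (fun p : ι × n => w p.1 * φ p.2) ⬝ᵥ (S *ᵥ fun p : ι × n => v p.1 * ψ p.2)
      = ∑ i, w i * v i * (φ ⬝ᵥ P i *ᵥ ψ) := by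
  simp only [dotProduct, Fintype.sum_prod_type, mulVec_tensor_of_blockDiagonal hS, Finset.mul_sum]
  exact Finset.sum_congr rfl fun i _ => Finset.sum_congr rfl fun a _ => by ring

end Select

theorem dotProduct_sum_smul_mulVec {ι m n R : Type*} [Fintype m] [Fintype n] [CommSemiring R]
    (s : Finset ι) (c : ι → R) (P : ι → Matrix m n R) (φ : m → R) (ψ : n → R) :
    φ ⬝ᵥ (∑ i ∈ s, c i • P i) *ᵥ ψ = ∑ i ∈ s, c i * (φ ⬝ᵥ P i *ᵥ ψ) := by
  simp only [sum_mulVec, dotProduct_sum, smul_mulVec, dotProduct_smul, smul_eq_mul]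

theorem conj_mul_self_ofReal_sqrt {x : ℝ} (hx : 0 ≤ x) :
    starRingEnd ℂ (Real.sqrt x : ℂ) * (Real.sqrt x : ℂ) = (x : ℂ) := by
  rw [Complex.conj_ofReal, ← Complex.ofReal_mul, Real.mul_self_sqrt hx]

theorem stmt8_general {ι n : Type*} [Fintype ι] [Fintype n] [DecidableEq ι]
    (h : ι → ℝ) (hh : ∀ i, 0 ≤ h i) (hpos : 0 < ∑ i, h i)
    (P : ι → Matrix n n ℂ)
    (S : Matrix (ι × n) (ι × n) ℂ)
    (hS : ∀ i a j b, S (i, a) (j, b) = if i = j then P i a b else 0)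
    (v : ι → ℂ) (hv : ∀ i, v i = (Real.sqrt (h i / ∑ i', h i') : ℝ))
    (ψ₁ ψ₂ : n → ℂ) :
    (∑ k : ι × n, (starRingEnd ℂ) (v k.1 * ψ₁ k.2) *
        (S *ᵥ (fun p : ι × n => v p.1 * ψ₂ p.2)) k)
      = ((1 / (∑ i, h i) : ℝ) : ℂ) *
        ∑ a, (starRingEnd ℂ) (ψ₁ a) * ((∑ i, (h i : ℂ) • P i) *ᵥ ψ₂) a := by
  have hweight : ∀ i, starRingEnd ℂ (v i) * v i = ((h i / ∑ i', h i' : ℝ) : ℂ) := fun i => by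
    rw [hv, conj_mul_self_ofReal_sqrt (div_nonneg (hh i) hpos.le)]
  calc _ = (fun p : ι × n => starRingEnd ℂ (v p.1) * star ψ₁ p.2) ⬝ᵥ
          (S *ᵥ fun p : ι × n => v p.1 * ψ₂ p.2) := by
        simp only [map_mul]; rfl
    _ = ∑ i, ((h i / ∑ i', h i' : ℝ) : ℂ) * (star ψ₁ ⬝ᵥ P i *ᵥ ψ₂) := by
        rw [tensor_dotProduct_mulVec_tensor_of_blockDiagonal hS
          (fun i => starRingEnd ℂ (v i)) v (star ψ₁) ψ₂]
        simp only [hweight]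
    _ = ((1 / (∑ i, h i) : ℝ) : ℂ) * (star ψ₁ ⬝ᵥ (∑ i, (h i : ℂ) • P i) *ᵥ ψ₂) := by
        rw [dotProduct_sum_smul_mulVec, Finset.mul_sum]
        push_cast
        exact Finset.sum_congr rfl fun i _ => by ring

/-- Correctness of the LCU block encoding: with `SELECT` matrix
`S (i,a) (j,b) = δ_{ij} (P i) a b`, prepared ancilla amplitudes
`v i = sqrt (h i / λ)` where `λ = ∑ h i > 0`, and tensor states
`(v ⊗ φ)(i,a) = v i · φ a`, one has
`⟨v ⊗ ψ₁, S (v ⊗ ψ₂)⟩ = (1/λ) ⟨ψ₁, O ψ₂⟩` for `O = ∑ i, h i • P i`. -/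
theorem stmt8 {ι n : Type*} [Fintype ι] [Fintype n] [DecidableEq ι] [DecidableEq n]
    (h : ι → ℝ) (hh : ∀ i, 0 ≤ h i) (hpos : 0 < ∑ i, h i)
    (P : ι → Matrix n n ℂ) (hP : ∀ i, P i ∈ Matrix.unitaryGroup n ℂ)
    (S : Matrix (ι × n) (ι × n) ℂ)
    (hS : ∀ i a j b, S (i, a) (j, b) = if i = j then P i a b else 0)
    (v : ι → ℂ) (hv : ∀ i, v i = (Real.sqrt (h i / ∑ i', h i') : ℝ))
    (ψ₁ ψ₂ : n → ℂ) :
    (∑ k : ι × n, (starRingEnd ℂ) (v k.1 * ψ₁ k.2) *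
        (S *ᵥ (fun p : ι × n => v p.1 * ψ₂ p.2)) k)
      = ((1 / (∑ i, h i) : ℝ) : ℂ) *
        ∑ a, (starRingEnd ℂ) (ψ₁ a) * ((∑ i, (h i : ℂ) • P i) *ᵥ ψ₂) a :=
  stmt8_general h hh hpos P S hS v hv ψ₁ ψ₂
end

section
/- Let H be a complex inner product space (inner product conjugate-linear in the first argument), ψ ∈ H a unit vector, U : H → H a unitary (linear isometric equivalence), and suppose a := ⟨ψ, U ψ⟩ is real with a² < 1. Set χ := (1−a²)^{−1/2} • (Uψ − a•ψ), let R_ψ : H → H be the reflection R_ψ v = v − 2⟨ψ,v⟩•ψ, and let S = R_ψ ∘ U ∘ R_ψ ∘ U⁻¹. Then S (ψ + Complex.I • χ) = ((2a² − 1) + 2a·sqrt(1−a²)·Complex.I) • (ψ + Complex.I • χ); in particular ψ + i χ is an eigenvector of the Szegedy walk operator S with eigenvalue e^{iθ} of unit modulus satisfying cos θ = 2a² − 1 = 2|⟨ψ|U|ψ⟩|² − 1. -/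
open scoped InnerProductSpace ComplexConjugate

/-!
Conjugating a reflection by `U` gives the reflection about the image vector, so
`S = R_ψ ∘ R_{Uψ}` is a product of two reflections. In the orthonormal basis `ψ, χ` of the
plane containing `Uψ = a ψ + √(1-a²) χ` it is a rotation, and `ψ + iχ` is an eigenvector of
it with eigenvalue `(a + i√(1-a²))² = (2a² - 1) + 2a√(1-a²) i`.
-/

section Householder

variable {H : Type*} [NormedAddCommGroup H] [InnerProductSpace ℂ H]

noncomputable def householder (u v : H) : H := v - (2 : ℂ) • (⟪u, v⟫_ℂ • u)

theorem LinearIsometryEquiv.apply_householder_symm (U : H ≃ₗᵢ[ℂ] H) (u v : H) :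
    U (householder u (U.symm v)) = householder (U u) v := by
  have hinner : ⟪u, U.symm v⟫_ℂ = ⟪U u, v⟫_ℂ := by
    rw [← U.inner_map_map, U.apply_symm_apply]
  rw [householder, householder, map_sub, U.apply_symm_apply, map_smul, map_smul, hinner]

theorem householder_householder_add_I_smul {e₁ e₂ : H}
    (h₁ : ⟪e₁, e₁⟫_ℂ = 1) (h₂ : ⟪e₂, e₂⟫_ℂ = 1) (h₁₂ : ⟪e₁, e₂⟫_ℂ = 0)
    {a s : ℝ} (has : a ^ 2 + s ^ 2 = 1) :
    householder e₁ (householder ((a : ℂ) • e₁ + (s : ℂ) • e₂) (e₁ + Complex.I • e₂))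
      = ((a : ℂ) + s * Complex.I) ^ 2 • (e₁ + Complex.I • e₂) := by
  have h₂₁ : ⟪e₂, e₁⟫_ℂ = 0 := by rw [← inner_conj_symm, h₁₂, map_zero]
  have has' : (a : ℂ) ^ 2 + (s : ℂ) ^ 2 = 1 := by exact_mod_cast has
  simp only [householder, inner_add_left, inner_add_right, inner_sub_right, inner_smul_left,
    inner_smul_right, h₁, h₂, h₁₂, h₂₁, Complex.conj_ofReal]
  match_scalars
  · linear_combination has' - (s : ℂ) ^ 2 * Complex.I_sq
  · linear_combination -Complex.I * has' - (Complex.I * (s : ℂ) ^ 2 + 2 * a * s) * Complex.I_sq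

theorem ofReal_sqrt_one_sub_sq_ne_zero {a : ℝ} (ha2 : a ^ 2 < 1) :
    ((√(1 - a ^ 2) : ℝ) : ℂ) ≠ 0 := by
  rw [Complex.ofReal_ne_zero, Real.sqrt_ne_zero']
  linarith

section GramSchmidt

variable {ψ w : H} {a : ℝ} (hψ : ⟪ψ, ψ⟫_ℂ = 1) (ha : ⟪ψ, w⟫_ℂ = a)

include hψ ha

theorem inner_inv_smul_sub_smul_right :
    ⟪ψ, ((√(1 - a ^ 2) : ℝ) : ℂ)⁻¹ • (w - (a : ℂ) • ψ)⟫_ℂ = 0 := by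
  rw [inner_smul_right, inner_sub_right, ha, inner_smul_right, hψ, mul_one, sub_self, mul_zero]

theorem inner_self_inv_smul_sub_smul (hw : ⟪w, w⟫_ℂ = 1) (ha2 : a ^ 2 < 1) :
    ⟪((√(1 - a ^ 2) : ℝ) : ℂ)⁻¹ • (w - (a : ℂ) • ψ),
      ((√(1 - a ^ 2) : ℝ) : ℂ)⁻¹ • (w - (a : ℂ) • ψ)⟫_ℂ = 1 := by
  have hwψ : ⟪w, ψ⟫_ℂ = a := by rw [← inner_conj_symm, ha, Complex.conj_ofReal]
  have hs : ((√(1 - a ^ 2) : ℝ) : ℂ) ^ 2 = 1 - (a : ℂ) ^ 2 := by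
    exact_mod_cast Real.sq_sqrt (by linarith : 0 ≤ 1 - a ^ 2)
  have hs0 := ofReal_sqrt_one_sub_sq_ne_zero ha2
  simp only [inner_smul_left, inner_smul_right, inner_sub_left, inner_sub_right, hψ, hw, ha,
    hwψ, map_inv₀, Complex.conj_ofReal]
  field_simp
  linear_combination -hs

end GramSchmidt

end Householder

/-- Eigenvalue relation for the Szegedy walk operator `S = R U R U⁻¹` with
`R = I − 2|ψ⟩⟨ψ|`: if `a = ⟨ψ, Uψ⟩` is real with `a² < 1`, then `ψ + i χ`
(with `χ` the normalized component of `Uψ` orthogonal to `ψ`) is an eigenvector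
of `S` with eigenvalue `(2a² − 1) + 2a√(1−a²) i`, a unit complex number `e^{iθ}`
with `cos θ = 2|⟨ψ|U|ψ⟩|² − 1`. -/
theorem stmt11 {H : Type*} [NormedAddCommGroup H] [InnerProductSpace ℂ H]
    (ψ : H) (hψ : ‖ψ‖ = 1) (U : H ≃ₗᵢ[ℂ] H) (a : ℝ)
    (ha : ⟪ψ, U ψ⟫_ℂ = (a : ℂ)) (ha2 : a ^ 2 < 1)
    (χ : H) (hχ : χ = ((Real.sqrt (1 - a ^ 2) : ℝ) : ℂ)⁻¹ • (U ψ - (a : ℂ) • ψ))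
    (R : H → H) (hR : ∀ v, R v = v - (2 : ℂ) • (⟪ψ, v⟫_ℂ • ψ))
    (S : H → H) (hS : ∀ v, S v = R (U (R (U.symm v)))) :
    S (ψ + Complex.I • χ)
      = ((2 * (a : ℂ) ^ 2 - 1) + 2 * (a : ℂ) * ((Real.sqrt (1 - a ^ 2) : ℝ) : ℂ) * Complex.I)
        • (ψ + Complex.I • χ) := by
  have hψψ : ⟪ψ, ψ⟫_ℂ = 1 := by rw [inner_self_eq_norm_sq_to_K, hψ]; norm_num
  have hUψ : ⟪U ψ, U ψ⟫_ℂ = 1 := by rw [U.inner_map_map, hψψ]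
  have hχχ : ⟪χ, χ⟫_ℂ = 1 := hχ ▸ inner_self_inv_smul_sub_smul hψψ ha hUψ ha2
  have hψχ : ⟪ψ, χ⟫_ℂ = 0 := hχ ▸ inner_inv_smul_sub_smul_right hψψ ha
  have hdecomp : U ψ = (a : ℂ) • ψ + ((√(1 - a ^ 2) : ℝ) : ℂ) • χ := by
    rw [hχ, smul_inv_smul₀ (ofReal_sqrt_one_sub_sq_ne_zero ha2), add_sub_cancel]
  have hs : a ^ 2 + √(1 - a ^ 2) ^ 2 = 1 := by
    rw [Real.sq_sqrt (by linarith)]; ring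
  have hsC : (a : ℂ) ^ 2 + ((√(1 - a ^ 2) : ℝ) : ℂ) ^ 2 = 1 := by exact_mod_cast hs
  rw [hS, show R = householder ψ from funext hR, U.apply_householder_symm, hdecomp,
    householder_householder_add_I_smul hψψ hχχ hψχ hs]
  congr 1
  linear_combination -hsC + ((√(1 - a ^ 2) : ℝ) : ℂ) ^ 2 * Complex.I_sq
end
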